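/- Let p, d ≥ 1 be integers with p ≥ 2(d+1) and λ > 0 a real with λ(d+1) ≥ 2. Group the first (d+1)·⌊p/(d+1)⌋ of the p vertices into ⌊p/(d+1)⌋ disjoint groups of size d+1 and let Ḡ be the graph whose edge set is the disjoint union of the complete graphs on each group. For each edge (u,v) of Ḡ, let G^{uv} be Ḡ with edge (u,v) removed, and let θ^{uv} be the parameter vector with entries λ on every edge of G^{uv} and 0 elsewhere. Then for all distinct edges (s,t) ≠ (u,v) of Ḡ, the symmetrized Kullback–Leibler divergence satisfies S(θ^{st}‖θ^{uv}) ≤ 8 λ d exp(3λ/2) / exp(λd/2). -/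

import Mathlib

open scoped Classical BigOperators
open Real

noncomputable section

/-- Sign of a Boolean spin: `true ↦ 1`, `false ↦ -1`. -/
def sgn (b : Bool) : ℝ := if b then 1 else -1

/-- Ising energy `Σ_{s<t} θ_{st} x_s x_t`. -/
def energy {p : ℕ} (θ : Fin p → Fin p → ℝ) (x : Fin p → Bool) : ℝ :=
  ∑ s : Fin p, ∑ t : Fin p, if s < t then θ s t * sgn (x s) * sgn (x t) else 0

/-- Partition function `Z(θ)`. -/
def Zpart {p : ℕ} (θ : Fin p → Fin p → ℝ) : ℝ :=
  ∑ x : Fin p → Bool, Real.exp (energy θ x)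

/-- Ising probability mass function `P_θ`. -/
def isingP {p : ℕ} (θ : Fin p → Fin p → ℝ) (x : Fin p → Bool) : ℝ :=
  Real.exp (energy θ x) / Zpart θ

/-- Probability of an event under `n` i.i.d. samples from `P_θ`. -/
def probn {p : ℕ} (n : ℕ) (θ : Fin p → Fin p → ℝ)
    (A : (Fin n → Fin p → Bool) → Prop) : ℝ :=
  ∑ xs : Fin n → Fin p → Bool, if A xs then ∏ i, isingP θ (xs i) else 0

/-- Probability of a single-sample event under `P_θ`. -/
def prob1 {p : ℕ} (θ : Fin p → Fin p → ℝ) (A : (Fin p → Bool) → Prop) : ℝ :=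
  ∑ x : Fin p → Bool, if A x then isingP θ x else 0

/-- A parameter vector: symmetric array vanishing on the diagonal. -/
def IsSymParam {p : ℕ} (θ : Fin p → Fin p → ℝ) : Prop :=
  (∀ s t, θ s t = θ t s) ∧ (∀ s, θ s s = 0)

/-- The class `Θ_{λ,ω}(G)` of admissible parameter vectors for graph `G`. -/
def ParamClass {p : ℕ} (G : SimpleGraph (Fin p)) (lam om : ℝ)
    (θ : Fin p → Fin p → ℝ) : Prop :=
  IsSymParam θ ∧ (∀ s t : Fin p, ¬ G.Adj s t → θ s t = 0) ∧
    (∀ s t : Fin p, G.Adj s t → lam ≤ |θ s t|) ∧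
    (∀ s : Fin p, (∑ t : Fin p, |θ s t|) ≤ om)

/-- The class `G_{p,d}` of graphs with maximum degree at most `d`. -/
def degClass (p d : ℕ) : Set (SimpleGraph (Fin p)) :=
  {G | ∀ v : Fin p, ({u | G.Adj v u}).ncard ≤ d}

/-- The class `G_{p,k}` of graphs with at most `k` edges. -/
def edgeClass (p k : ℕ) : Set (SimpleGraph (Fin p)) :=
  {G | G.edgeSet.ncard ≤ k}

/-- Kullback–Leibler divergence `D(θ‖θ')` between Ising models. -/
def KLdiv {p : ℕ} (θ θ' : Fin p → Fin p → ℝ) : ℝ :=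
  ∑ x : Fin p → Bool, isingP θ x * Real.log (isingP θ x / isingP θ' x)

/-- Symmetrized KL divergence `S(θ‖θ')`. -/
def symKL {p : ℕ} (θ θ' : Fin p → Fin p → ℝ) : ℝ := KLdiv θ θ' + KLdiv θ' θ

/-- The divergence `J(θ‖θ') = D((θ+θ')/2‖θ) + D((θ+θ')/2‖θ')`. -/
def Jdiv {p : ℕ} (θ θ' : Fin p → Fin p → ℝ) : ℝ :=
  KLdiv (fun s t => (θ s t + θ' s t) / 2) θ +
    KLdiv (fun s t => (θ s t + θ' s t) / 2) θ'

/-- Mean parameter `μ_{st}(θ) = E_θ[X_s X_t]`. -/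
def meanPar {p : ℕ} (θ : Fin p → Fin p → ℝ) (s t : Fin p) : ℝ :=
  ∑ x : Fin p → Bool, isingP θ x * (sgn (x s) * sgn (x t))

/-- Adjacency relation of the graph `Ḡ` that is a disjoint union of cliques:
the first `(d+1)·⌊p/(d+1)⌋` vertices are grouped into consecutive blocks of size
`d+1`, and two vertices are adjacent iff they are distinct, lie in the same block,
and belong to one of these blocks. -/
def barAdj (p d : ℕ) (u v : Fin p) : Prop :=
  u ≠ v ∧ u.val / (d + 1) = v.val / (d + 1) ∧
    u.val < (d + 1) * (p / (d + 1)) ∧ v.val < (d + 1) * (p / (d + 1))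

/-! The difference `θ^{st} - θ^{uv}` is `λ` on the edge `uv` and `-λ` on `st`, and for Ising models
`S(θ‖θ') = Σ_{a<b} (θ_{ab} - θ'_{ab}) (μ_{ab}(θ) - μ_{ab}(θ'))`. Since `|μ| ≤ 1`, this gives
`S ≤ λ (1 - μ_{uv}(θ^{uv})) + λ (1 - μ_{st}(θ^{st}))`: it suffices that a removed edge stays
strongly correlated.

The model `θ^{st}` factorizes over the blocks, so `μ_{st}(θ^{st})` is computed on the block of
`s`, the complete graph on `d + 1` vertices minus the edge `st`, with energy
`λ ((Σ σ)² - (d + 1)) / 2 - λ σ_s σ_t`. The two constant configurations have the maximal energy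
`M`. A configuration with `σ_s ≠ σ_t` and `k`, `l` plus and minus spins among the other `d - 1`
vertices has energy `M - 2λ(d - 1) - 2λkl`, and `e^{-2λkl} ≤ q^k + q^l` for `q = e^{-λ(d-1)}`.
Summing over configurations, `1 - μ_{st} ≤ 8 e^{-2λ(d-1)} (1 + q)^{d-1}`. When the target bound
is below the trivial bound `2`, then `e^{λ(d-3)/2} > 2d`, so `(d - 1) q ≤ 1`, `(1 + q)^{d-1} ≤ e`,
and the estimate is far below the target. -/

theorem sgn_mul_self (b : Bool) : sgn b * sgn b = 1 := by cases b <;> norm_num [sgn]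

theorem sgn_eq_ite_sub_ite (b : Bool) :
    sgn b = (if b = true then 1 else 0) - if b = false then 1 else 0 := by
  cases b <;> norm_num [sgn]

theorem sgn_add_sgn_of_ne {b c : Bool} (h : b ≠ c) : sgn b + sgn c = 0 := by
  cases b <;> cases c <;> simp_all [sgn]

theorem sgn_mul_sgn_of_ne {b c : Bool} (h : b ≠ c) : sgn b * sgn c = -1 := by
  cases b <;> cases c <;> simp_all [sgn]

theorem exp_neg_two_mul_mul_le {lam k l : ℝ} (hlam : 0 ≤ lam) (hk : 0 ≤ k) (hl : 0 ≤ l) :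
    exp (-(2 * lam * k * l)) ≤ exp (-(lam * (k + l) * k)) + exp (-(lam * (k + l) * l)) := by
  wlog hkl : k ≤ l generalizing k l
  · have := this hl hk (le_of_not_ge hkl)
    rwa [add_comm l k, add_comm (exp _), mul_right_comm (2 * lam) l k] at this
  have hexp : exp (-(2 * lam * k * l)) ≤ exp (-(lam * (k + l) * k)) :=
    exp_le_exp.mpr (by nlinarith [mul_nonneg (mul_nonneg hlam hk) (sub_nonneg.mpr hkl)])
  linarith [exp_pos (-(lam * (k + l) * l))]

theorem one_add_pow_le_exp_one {n : ℕ} {q : ℝ} (hq : 0 ≤ q) (hnq : n * q ≤ 1) :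
    (1 + q) ^ n ≤ exp 1 :=
  calc (1 + q) ^ n ≤ exp q ^ n := by gcongr; linarith [add_one_le_exp q]
    _ = exp (n * q) := (exp_nat_mul q n).symm
    _ ≤ exp 1 := exp_le_exp.mpr hnq

section PairSums

variable {α : Type*} [Fintype α] [LinearOrder α]

theorem sum_sum_ite_lt_of_symm (g : α → α → ℝ) (hg : ∀ a b, g a b = g b a) :
    ∑ a, ∑ b, (if a < b then g a b else 0) = ((∑ a, ∑ b, g a b) - ∑ a, g a a) / 2 := by
  have split : ∀ a b, g a b =
      (if a < b then g a b else 0) + (if b < a then g b a else 0) + if a = b then g a b else 0 := by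
    intro a b
    rcases lt_trichotomy a b with h | rfl | h
    · simp [h, h.not_gt, h.ne]
    · simp
    · simp [h, h.not_gt, h.ne', hg a b]
  have swap : ∑ a : α, ∑ b : α, (if b < a then g b a else 0)
      = ∑ a : α, ∑ b : α, (if a < b then g a b else 0) := Finset.sum_comm
  have diag : ∑ a : α, ∑ b : α, (if a = b then g a b else 0) = ∑ a, g a a := by
    simp
  conv_rhs => rw [Finset.sum_congr rfl fun a _ => Finset.sum_congr rfl fun b _ => split a b]
  simp only [Finset.sum_add_distrib, swap, diag]
  ring

theorem sum_sum_ite_lt_edge (X : α → α → ℝ) (hX : ∀ a b, X a b = X b a) {u v : α}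
    (huv : u ≠ v) (c : ℝ) :
    ∑ a, ∑ b, (if a < b then (if a = u ∧ b = v ∨ a = v ∧ b = u then c else 0) * X a b else 0)
      = c * X u v := by
  wlog h : u < v generalizing u v
  · have := this huv.symm (huv.symm.lt_of_le (not_lt.mp h))
    simpa [or_comm, hX v u] using this
  have key : ∀ a b : α, (if a < b then (if a = u ∧ b = v ∨ a = v ∧ b = u then c else 0) * X a b
      else 0) = if a = u ∧ b = v then c * X a b else 0 := by
    intro a b
    by_cases h1 : a = u ∧ b = v
    · simp [h1, h]
    · by_cases h2 : a = v ∧ b = u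
      · obtain ⟨rfl, rfl⟩ := h2
        simp [h.not_gt, huv.symm]
      · simp [h1, h2]
  simp_rw [key, ite_and]
  simp

end PairSums

section IsingBasics

variable {p : ℕ} (θ θ' : Fin p → Fin p → ℝ)

theorem Zpart_pos : 0 < Zpart θ :=
  Finset.sum_pos (fun _ _ => exp_pos _) Finset.univ_nonempty

theorem isingP_pos (x : Fin p → Bool) : 0 < isingP θ x :=
  div_pos (exp_pos _) (Zpart_pos θ)

theorem sum_isingP : ∑ x, isingP θ x = 1 := by
  simp only [isingP, ← Finset.sum_div]
  exact div_self (Zpart_pos θ).ne'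

theorem neg_one_le_meanPar (s t : Fin p) : -1 ≤ meanPar θ s t := by
  have hcorr : ∀ x : Fin p → Bool, -1 ≤ sgn (x s) * sgn (x t) := by
    intro x; cases x s <;> cases x t <;> norm_num [sgn]
  calc (-1 : ℝ) = ∑ x, isingP θ x * -1 := by simp [sum_isingP]
    _ ≤ meanPar θ s t :=
      Finset.sum_le_sum fun x _ => mul_le_mul_of_nonneg_left (hcorr x) (isingP_pos θ x).le

theorem meanPar_le_one (s t : Fin p) : meanPar θ s t ≤ 1 := by
  have hcorr : ∀ x : Fin p → Bool, sgn (x s) * sgn (x t) ≤ 1 := by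
    intro x; cases x s <;> cases x t <;> norm_num [sgn]
  calc meanPar θ s t ≤ ∑ x, isingP θ x * 1 :=
      Finset.sum_le_sum fun x _ => mul_le_mul_of_nonneg_left (hcorr x) (isingP_pos θ x).le
    _ = 1 := by simp [sum_isingP]

theorem meanPar_comm (s t : Fin p) : meanPar θ s t = meanPar θ t s := by
  simp only [meanPar, mul_comm (sgn _) (sgn _)]

theorem log_isingP_div (x : Fin p → Bool) :
    log (isingP θ x / isingP θ' x)
      = energy θ x - energy θ' x - (log (Zpart θ) - log (Zpart θ')) := by
  rw [log_div (isingP_pos θ x).ne' (isingP_pos θ' x).ne', isingP, isingP,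
    log_div (exp_pos _).ne' (Zpart_pos θ).ne', log_div (exp_pos _).ne' (Zpart_pos θ').ne',
    log_exp, log_exp]
  ring

theorem symKL_eq_sum_mul :
    symKL θ θ' = ∑ x, (isingP θ x - isingP θ' x) * (energy θ x - energy θ' x) := by
  set c := log (Zpart θ) - log (Zpart θ')
  have hterm : ∀ x, isingP θ x * log (isingP θ x / isingP θ' x)
      + isingP θ' x * log (isingP θ' x / isingP θ x)
      = (isingP θ x - isingP θ' x) * (energy θ x - energy θ' x)
        - (isingP θ x - isingP θ' x) * c := by
    intro x; rw [log_isingP_div, log_isingP_div]; ring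
  have hc : ∑ x, (isingP θ x - isingP θ' x) * c = 0 := by
    rw [← Finset.sum_mul, Finset.sum_sub_distrib, sum_isingP, sum_isingP, sub_self, zero_mul]
  rw [symKL, KLdiv, KLdiv, ← Finset.sum_add_distrib, Finset.sum_congr rfl fun x _ => hterm x,
    Finset.sum_sub_distrib, hc, sub_zero]

theorem symKL_eq_sum_lt :
    symKL θ θ' = ∑ a, ∑ b,
      if a < b then (θ a b - θ' a b) * (meanPar θ a b - meanPar θ' a b) else 0 := by
  have henergy : ∀ x, energy θ x - energy θ' x = ∑ a, ∑ b,
      if a < b then (θ a b - θ' a b) * (sgn (x a) * sgn (x b)) else 0 := by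
    intro x
    simp only [energy, ← Finset.sum_sub_distrib]
    refine Finset.sum_congr rfl fun a _ => Finset.sum_congr rfl fun b _ => ?_
    split_ifs <;> ring
  simp only [symKL_eq_sum_mul, henergy, Finset.mul_sum]
  rw [Finset.sum_comm]
  refine Finset.sum_congr rfl fun a _ => ?_
  rw [Finset.sum_comm]
  refine Finset.sum_congr rfl fun b _ => ?_
  split_ifs
  · simp only [meanPar, Finset.mul_sum, ← Finset.sum_sub_distrib]
    exact Finset.sum_congr rfl fun x _ => by ring
  · simp

theorem symKL_eq_of_sub_eq {s t u v : Fin p} (hst : s ≠ t) (huv : u ≠ v) (lam : ℝ)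
    (hsub : ∀ a b, θ a b - θ' a b = (if a = u ∧ b = v ∨ a = v ∧ b = u then lam else 0)
      - if a = s ∧ b = t ∨ a = t ∧ b = s then lam else 0) :
    symKL θ θ'
      = lam * (meanPar θ u v - meanPar θ' u v) - lam * (meanPar θ s t - meanPar θ' s t) := by
  set X := fun a b => meanPar θ a b - meanPar θ' a b
  have hX : ∀ a b, X a b = X b a := fun a b => by
    simp only [X, meanPar_comm θ a b, meanPar_comm θ' a b]
  rw [symKL_eq_sum_lt, ← sum_sum_ite_lt_edge X hX huv, ← sum_sum_ite_lt_edge X hX hst,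
    ← Finset.sum_sub_distrib]
  refine Finset.sum_congr rfl fun a _ => ?_
  rw [← Finset.sum_sub_distrib]
  refine Finset.sum_congr rfl fun b _ => ?_
  rw [hsub]
  split_ifs <;> ring

end IsingBasics

section GeneralSites

variable {α : Type*} [Fintype α] [LinearOrder α]

/-- `energy` on an arbitrary finite linearly ordered set of sites, so that it restricts to a
block of `Fin p`. -/
def pairEnergy (κ : α → α → ℝ) (σ : α → Bool) : ℝ :=
  ∑ a, ∑ b, if a < b then κ a b * sgn (σ a) * sgn (σ b) else 0

def spinCorr (κ : α → α → ℝ) (s t : α) : ℝ :=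
  (∑ σ : α → Bool, exp (pairEnergy κ σ) * (sgn (σ s) * sgn (σ t)))
    / ∑ σ : α → Bool, exp (pairEnergy κ σ)

theorem meanPar_eq_spinCorr {p : ℕ} (θ : Fin p → Fin p → ℝ) (s t : Fin p) :
    meanPar θ s t = spinCorr θ s t := by
  simp only [meanPar, spinCorr, isingP, Zpart, Finset.sum_div, div_mul_eq_mul_div]
  rfl

variable (Q : α → Prop) [DecidablePred Q]

theorem pairEnergy_eq_add_of_separated (κ : α → α → ℝ) (hκ : ∀ a b, ¬(Q a ↔ Q b) → κ a b = 0)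
    (σ : α → Bool) :
    pairEnergy κ σ = pairEnergy (fun a b : {a // Q a} => κ a b) (fun a => σ a)
      + pairEnergy (fun a b : {a // ¬Q a} => κ a b) (fun a => σ a) := by
  set F := fun a b => if a < b then κ a b * sgn (σ a) * sgn (σ b) else 0
  have hcross : ∀ a b, ¬(Q a ↔ Q b) → F a b = 0 := fun a b h => by simp [F, hκ a b h]
  have hsplit : ∀ f : α → ℝ, ∑ a, f a = ∑ a : {a // Q a}, f a + ∑ a : {a // ¬Q a}, f a :=
    fun f => (Fintype.sum_subtype_add_sum_subtype Q f).symm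
  calc pairEnergy κ σ = ∑ a, ∑ b, F a b := rfl
    _ = ∑ a : {a // Q a}, ∑ b : {a // Q a}, F a b
        + ∑ a : {a // ¬Q a}, ∑ b : {a // ¬Q a}, F a b := by
      have hQ : ∀ a : {a // Q a}, ∑ b : {a // ¬Q a}, F a b = 0 :=
        fun a => Finset.sum_eq_zero fun b _ => hcross _ _ (by simp [a.2, b.2])
      have hnQ : ∀ a : {a // ¬Q a}, ∑ b : {a // Q a}, F a b = 0 :=
        fun a => Finset.sum_eq_zero fun b _ => hcross _ _ (by simp [a.2, b.2])
      rw [hsplit]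
      simp only [hsplit (F _), hQ, hnQ, add_zero, zero_add]
    _ = _ := rfl

theorem sum_pi_mul_eq_sum_mul_sum {β : Type*} [Fintype β] (F : ({a // Q a} → β) → ℝ)
    (G : ({a // ¬Q a} → β) → ℝ) :
    ∑ x : α → β, F (fun a => x a) * G (fun a => x a) = (∑ σ, F σ) * ∑ τ, G τ := by
  rw [Finset.sum_mul_sum, ← Fintype.sum_prod_type']
  exact Fintype.sum_equiv (Equiv.piEquivPiSubtypeProd Q fun _ => β) _ _ fun x => rfl

theorem spinCorr_eq_of_separated (κ : α → α → ℝ) (hκ : ∀ a b, ¬(Q a ↔ Q b) → κ a b = 0)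
    (s t : {a // Q a}) :
    spinCorr κ s t = spinCorr (fun a b : {a // Q a} => κ a b) s t := by
  set C := ∑ τ : {a // ¬Q a} → Bool, exp (pairEnergy (fun a b : {a // ¬Q a} => κ a b) τ)
  have hC : 0 < C := Finset.sum_pos (fun _ _ => exp_pos _) Finset.univ_nonempty
  have hfactor : ∀ f : ({a // Q a} → Bool) → ℝ,
      ∑ x : α → Bool, exp (pairEnergy κ x) * f (fun a => x a)
        = (∑ σ, exp (pairEnergy (fun a b : {a // Q a} => κ a b) σ) * f σ) * C := by
    intro f
    rw [← sum_pi_mul_eq_sum_mul_sum Q]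
    refine Finset.sum_congr rfl fun x _ => ?_
    rw [pairEnergy_eq_add_of_separated Q κ hκ, exp_add]
    ring
  have hnum := hfactor fun σ => sgn (σ s) * sgn (σ t)
  have hden := hfactor fun _ => 1
  simp only [mul_one] at hden
  rw [spinCorr, spinCorr, hnum, hden]
  exact mul_div_mul_right _ _ hC.ne'

end GeneralSites

/-- The bound on `1 - μ_{st}` for the complete graph on `n + 2` vertices minus the edge `st`. -/
def corrDeficitBound (lam : ℝ) (n : ℕ) : ℝ :=
  8 * exp (-(2 * lam * n)) * (1 + exp (-(lam * n))) ^ n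

section CliqueMinusEdge

variable {α : Type*} [Fintype α] [LinearOrder α] {s t : α} {n : ℕ} {lam : ℝ}
  {κ : α → α → ℝ}

theorem pairEnergy_eq_of_clique_minus_edge (hst : s ≠ t)
    (hκ : ∀ a b, a ≠ b → κ a b = if a = s ∧ b = t ∨ a = t ∧ b = s then 0 else lam)
    (σ : α → Bool) :
    pairEnergy κ σ = lam * ((∑ a, sgn (σ a)) ^ 2 - Fintype.card α) / 2
      - lam * (sgn (σ s) * sgn (σ t)) := by
  have hterm : ∀ a b, (if a < b then κ a b * sgn (σ a) * sgn (σ b) else 0)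
      = (if a < b then lam * sgn (σ a) * sgn (σ b) else 0)
        - if a < b then (if a = s ∧ b = t ∨ a = t ∧ b = s then lam else 0)
            * (sgn (σ a) * sgn (σ b)) else 0 := by
    intro a b
    by_cases hab : a < b
    · rw [if_pos hab, if_pos hab, if_pos hab, hκ a b hab.ne]
      split_ifs <;> ring
    · simp [hab]
  have hall := sum_sum_ite_lt_of_symm (fun a b => lam * sgn (σ a) * sgn (σ b))
    fun a b => by ring
  have hedge := sum_sum_ite_lt_edge (fun a b => sgn (σ a) * sgn (σ b)) (fun a b => by ring) hst lam
  rw [pairEnergy, Finset.sum_congr rfl fun a _ => Finset.sum_congr rfl fun b _ => hterm a b]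
  simp only [Finset.sum_sub_distrib]
  rw [hall, hedge]
  simp only [mul_assoc, sgn_mul_self,
    ← Finset.mul_sum, ← Finset.sum_mul, Finset.sum_const, Finset.card_univ, nsmul_eq_mul]
  ring

theorem pairEnergy_const_of_clique_minus_edge (hst : s ≠ t) (hcard : Fintype.card α = n + 2)
    (hκ : ∀ a b, a ≠ b → κ a b = if a = s ∧ b = t ∨ a = t ∧ b = s then 0 else lam) (b : Bool) :
    pairEnergy κ (fun _ => b) = lam * (((n : ℝ) + 2) ^ 2 - (n + 2)) / 2 - lam := by
  rw [pairEnergy_eq_of_clique_minus_edge hst hκ, sgn_mul_self, Finset.sum_const,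
    Finset.card_univ, hcard, nsmul_eq_mul, mul_pow, sq (sgn b), sgn_mul_self]
  push_cast
  ring

theorem exp_pairEnergy_le_of_ne (hst : s ≠ t) (hcard : Fintype.card α = n + 2)
    (hlam : 0 ≤ lam)
    (hκ : ∀ a b, a ≠ b → κ a b = if a = s ∧ b = t ∨ a = t ∧ b = s then 0 else lam)
    {σ : α → Bool} (hσ : σ s ≠ σ t) :
    exp (pairEnergy κ σ) ≤ exp (lam * (((n : ℝ) + 2) ^ 2 - (n + 2)) / 2 - lam)
      * exp (-(2 * lam * n))
      * ((∏ a ∈ ({s, t} : Finset α)ᶜ, if σ a = true then exp (-(lam * n)) else 1)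
        + ∏ a ∈ ({s, t} : Finset α)ᶜ, if σ a = false then exp (-(lam * n)) else 1) := by
  set O := ({s, t} : Finset α)ᶜ
  set k : Bool → ℝ := fun b => ∑ a ∈ O, if σ a = b then 1 else 0
  have hk : k true + k false = n := by
    have hO : O.card = n := by
      rw [Finset.card_compl, Finset.card_pair hst, hcard, Nat.add_sub_cancel]
    rw [← Finset.sum_add_distrib, ← hO, Finset.card_eq_sum_ones, Nat.cast_sum]
    refine Finset.sum_congr rfl fun a _ => ?_
    cases σ a <;> simp
  have hm : ∑ a, sgn (σ a) = k true - k false := by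
    rw [← Finset.sum_add_sum_compl {s, t}, Finset.sum_pair hst, sgn_add_sgn_of_ne hσ, zero_add,
      ← Finset.sum_sub_distrib]
    exact Finset.sum_congr rfl fun a _ => sgn_eq_ite_sub_ite _
  have hprod : ∀ b, (∏ a ∈ O, if σ a = b then exp (-(lam * n)) else 1)
      = exp (-(lam * (k true + k false) * k b)) := by
    intro b
    rw [hk, Finset.mul_sum, ← Finset.sum_neg_distrib, exp_sum]
    refine Finset.prod_congr rfl fun a _ => ?_
    split_ifs <;> simp
  have henergy : pairEnergy κ σ = (lam * (((n : ℝ) + 2) ^ 2 - (n + 2)) / 2 - lam)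
      + -(2 * lam * n) + -(2 * lam * k true * k false) := by
    rw [pairEnergy_eq_of_clique_minus_edge hst hκ, hm, sgn_mul_sgn_of_ne hσ, hcard]
    push_cast
    rw [← hk]
    ring
  have hk0 : ∀ b, 0 ≤ k b := fun b => Finset.sum_nonneg fun a _ => by split_ifs <;> norm_num
  rw [henergy, exp_add, exp_add, hprod, hprod]
  gcongr
  exact exp_neg_two_mul_mul_le hlam (hk0 true) (hk0 false)

theorem sum_prod_compl_pair_ite (hst : s ≠ t) (hcard : Fintype.card α = n + 2)
    (b : Bool) (q : ℝ) :
    ∑ σ : α → Bool, ∏ a ∈ ({s, t} : Finset α)ᶜ, (if σ a = b then q else 1)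
      = 4 * (1 + q) ^ n := by
  set O := ({s, t} : Finset α)ᶜ
  have hO : O.card = n := by
    rw [Finset.card_compl, Finset.card_pair hst, hcard, Nat.add_sub_cancel]
  have hOc : (Finset.univ.filter (· ∉ O)).card = 2 := by
    rw [Finset.filter_notMem_eq_sdiff, ← Finset.compl_eq_univ_sdiff, compl_compl,
      Finset.card_pair hst]
  calc ∑ σ : α → Bool, ∏ a ∈ O, (if σ a = b then q else 1)
      = ∑ σ : α → Bool, ∏ a, (if a ∈ O then (if σ a = b then q else 1) else 1) := by
        simp only [Fintype.prod_ite_mem]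
    _ = ∏ a, ∑ c : Bool, (if a ∈ O then (if c = b then q else 1) else 1) := by
        rw [Fintype.prod_sum]
    _ = ∏ a, (if a ∈ O then 1 + q else 2) := by
        refine Finset.prod_congr rfl fun a _ => ?_
        split_ifs <;> cases b <;> norm_num [Fintype.sum_bool, add_comm]
    _ = 4 * (1 + q) ^ n := by
        rw [Finset.prod_ite, Finset.prod_const, Finset.prod_const, Finset.filter_mem_eq_inter,
          Finset.univ_inter, hO, hOc]
        ring

theorem sum_exp_pairEnergy_mul_le (hst : s ≠ t) (hcard : Fintype.card α = n + 2)
    (hlam : 0 ≤ lam)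
    (hκ : ∀ a b, a ≠ b → κ a b = if a = s ∧ b = t ∨ a = t ∧ b = s then 0 else lam) :
    ∑ σ : α → Bool, exp (pairEnergy κ σ) * (1 - sgn (σ s) * sgn (σ t))
      ≤ corrDeficitBound lam n * (2 * exp (lam * (((n : ℝ) + 2) ^ 2 - (n + 2)) / 2 - lam)) := by
  set M := lam * (((n : ℝ) + 2) ^ 2 - (n + 2)) / 2 - lam
  set w := fun (b : Bool) (σ : α → Bool) =>
    ∏ a ∈ ({s, t} : Finset α)ᶜ, if σ a = b then exp (-(lam * n)) else 1
  have hterm : ∀ σ : α → Bool, exp (pairEnergy κ σ) * (1 - sgn (σ s) * sgn (σ t))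
      ≤ 2 * (exp M * exp (-(2 * lam * n)) * (w true σ + w false σ)) := by
    intro σ
    by_cases hσ : σ s = σ t
    · have hw : ∀ b, 0 ≤ w b σ :=
        fun b => Finset.prod_nonneg fun a _ => by split_ifs <;> positivity
      rw [hσ, sgn_mul_self, sub_self, mul_zero]
      have := add_nonneg (hw true) (hw false)
      positivity
    · rw [sgn_mul_sgn_of_ne hσ, mul_comm 2, show (1 : ℝ) - -1 = 2 by norm_num]
      gcongr
      exact exp_pairEnergy_le_of_ne hst hcard hlam hκ hσ
  refine (Finset.sum_le_sum fun σ _ => hterm σ).trans_eq ?_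
  rw [← Finset.mul_sum, ← Finset.mul_sum, Finset.sum_add_distrib,
    sum_prod_compl_pair_ite hst hcard, sum_prod_compl_pair_ite hst hcard, corrDeficitBound]
  ring

theorem one_sub_spinCorr_le_of_clique_minus_edge (hst : s ≠ t) (hcard : Fintype.card α = n + 2)
    (hlam : 0 ≤ lam)
    (hκ : ∀ a b, a ≠ b → κ a b = if a = s ∧ b = t ∨ a = t ∧ b = s then 0 else lam) :
    1 - spinCorr κ s t ≤ corrDeficitBound lam n := by
  set M := lam * (((n : ℝ) + 2) ^ 2 - (n + 2)) / 2 - lam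
  have hZ0 : ∑ σ : α → Bool, exp (pairEnergy κ σ) ≠ 0 :=
    (Finset.sum_pos (fun _ _ => exp_pos _) Finset.univ_nonempty).ne'
  have hcorr : 1 - spinCorr κ s t
      = (∑ σ : α → Bool, exp (pairEnergy κ σ) * (1 - sgn (σ s) * sgn (σ t)))
        / ∑ σ : α → Bool, exp (pairEnergy κ σ) := by
    rw [spinCorr, eq_div_iff hZ0, sub_mul, one_mul, div_mul_cancel₀ _ hZ0,
      ← Finset.sum_sub_distrib]
    exact Finset.sum_congr rfl fun σ _ => by ring
  have hZ : 2 * exp M ≤ ∑ σ : α → Bool, exp (pairEnergy κ σ) := by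
    have hne : (fun _ => true : α → Bool) ≠ fun _ => false := fun h => by
      simpa using congrFun h s
    calc 2 * exp M = ∑ σ ∈ {fun _ => true, fun _ => false}, exp (pairEnergy κ σ) := by
          rw [Finset.sum_pair hne, pairEnergy_const_of_clique_minus_edge hst hcard hκ,
            pairEnergy_const_of_clique_minus_edge hst hcard hκ, two_mul]
      _ ≤ _ := Finset.sum_le_sum_of_subset_of_nonneg (Finset.subset_univ _)
          fun _ _ _ => (exp_pos _).le
  have hB : 0 ≤ corrDeficitBound lam n := by unfold corrDeficitBound; positivity
  rw [hcorr, div_le_iff₀ ((by positivity : (0 : ℝ) < 2 * exp M).trans_le hZ)]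
  exact (sum_exp_pairEnergy_mul_le hst hcard hlam hκ).trans (mul_le_mul_of_nonneg_left hZ hB)

end CliqueMinusEdge

theorem card_subtype_div_eq {p m c : ℕ} (hm : 0 < m) (hc : (c + 1) * m ≤ p) :
    Fintype.card {a : Fin p // a.val / m = c} = m := by
  rw [Fintype.card_subtype, ← Finset.card_map Fin.valEmbedding]
  convert Nat.card_Ico (c * m) (c * m + m) using 2
  · ext k
    simp only [Finset.mem_map, Finset.mem_filter, Finset.mem_univ, true_and,
      Fin.valEmbedding_apply, Finset.mem_Ico, Nat.div_eq_iff hm]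
    constructor
    · rintro ⟨a, ha, rfl⟩
      omega
    · intro hk
      exact ⟨⟨k, by nlinarith⟩, by dsimp only; omega, rfl⟩
  · omega

/-- The parameter `θ^{st}` of the ensemble: weight `λ` on every edge of `Ḡ` except `st`. -/
def removedEdgeParam (p d : ℕ) (lam : ℝ) (s t : Fin p) : Fin p → Fin p → ℝ :=
  fun a b => if barAdj p d a b ∧ ¬((a = s ∧ b = t) ∨ (a = t ∧ b = s)) then lam else 0

section Ensemble

variable {p d : ℕ} {lam : ℝ} {s t u v : Fin p}

theorem barAdj_symm (h : barAdj p d u v) : barAdj p d v u :=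
  ⟨h.1.symm, h.2.1.symm, h.2.2.2, h.2.2.1⟩

theorem barAdj_of_eq_or_eq {a b : Fin p} (hst : barAdj p d s t)
    (h : a = s ∧ b = t ∨ a = t ∧ b = s) : barAdj p d a b := by
  rcases h with ⟨rfl, rfl⟩ | ⟨rfl, rfl⟩
  exacts [hst, barAdj_symm hst]

theorem card_block (hs : s.val < (d + 1) * (p / (d + 1))) :
    Fintype.card {a : Fin p // a.val / (d + 1) = s.val / (d + 1)} = d + 1 := by
  refine card_subtype_div_eq d.succ_pos ?_
  have : s.val / (d + 1) < p / (d + 1) :=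
    (Nat.div_lt_iff_lt_mul d.succ_pos).mpr (by linarith)
  calc (s.val / (d + 1) + 1) * (d + 1) ≤ p / (d + 1) * (d + 1) := Nat.mul_le_mul_right _ this
    _ ≤ p := Nat.div_mul_le_self p (d + 1)

theorem val_lt_of_div_eq_div {a : Fin p} (hs : s.val < (d + 1) * (p / (d + 1)))
    (ha : a.val / (d + 1) = s.val / (d + 1)) : a.val < (d + 1) * (p / (d + 1)) := by
  rw [mul_comm, ← Nat.div_lt_iff_lt_mul d.succ_pos, ha, Nat.div_lt_iff_lt_mul d.succ_pos,
    mul_comm]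
  exact hs

theorem removedEdgeParam_eq_zero_of_not_block (a b : Fin p)
    (h : ¬(a.val / (d + 1) = s.val / (d + 1) ↔ b.val / (d + 1) = s.val / (d + 1))) :
    removedEdgeParam p d lam s t a b = 0 :=
  if_neg fun hab => h (by rw [hab.1.2.1])

theorem removedEdgeParam_block (hst : barAdj p d s t)
    (a b : {a : Fin p // a.val / (d + 1) = s.val / (d + 1)}) (hab : a ≠ b) :
    removedEdgeParam p d lam s t a b
      = if a = ⟨s, rfl⟩ ∧ b = ⟨t, hst.2.1.symm⟩ ∨ a = ⟨t, hst.2.1.symm⟩ ∧ b = ⟨s, rfl⟩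
        then 0 else lam := by
  have hadj : barAdj p d a b :=
    ⟨Subtype.coe_ne_coe.mpr hab, a.2.trans b.2.symm, val_lt_of_div_eq_div hst.2.2.1 a.2,
      val_lt_of_div_eq_div hst.2.2.1 b.2⟩
  simp only [removedEdgeParam, hadj, true_and, Subtype.ext_iff]
  split_ifs <;> tauto

theorem removedEdgeParam_sub (hst : barAdj p d s t) (huv : barAdj p d u v)
    (hdiff : ¬(s = u ∧ t = v ∨ s = v ∧ t = u)) (a b : Fin p) :
    removedEdgeParam p d lam s t a b - removedEdgeParam p d lam u v a b
      = (if a = u ∧ b = v ∨ a = v ∧ b = u then lam else 0)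
        - if a = s ∧ b = t ∨ a = t ∧ b = s then lam else 0 := by
  by_cases h1 : a = u ∧ b = v ∨ a = v ∧ b = u <;> by_cases h2 : a = s ∧ b = t ∨ a = t ∧ b = s
  · exfalso
    rcases h1 with ⟨rfl, rfl⟩ | ⟨rfl, rfl⟩ <;> rcases h2 with ⟨h, h'⟩ | ⟨h, h'⟩ <;>
      exact hdiff (by simp [h, h'])
  · simp [removedEdgeParam, h1, h2, barAdj_of_eq_or_eq huv h1]
  · simp [removedEdgeParam, h1, h2, barAdj_of_eq_or_eq hst h2]
  · simp [removedEdgeParam, h1, h2]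

theorem one_sub_meanPar_removedEdgeParam_le (hlam : 0 ≤ lam) (hst : barAdj p d s t) :
    1 - meanPar (removedEdgeParam p d lam s t) s t ≤ corrDeficitBound lam (d - 1) := by
  have hd : d ≠ 0 := by
    rintro rfl
    exact hst.1 (Fin.ext (by simpa using hst.2.1))
  have hcard : Fintype.card {a : Fin p // a.val / (d + 1) = s.val / (d + 1)} = d - 1 + 2 := by
    rw [card_block hst.2.2.1]
    omega
  rw [meanPar_eq_spinCorr, spinCorr_eq_of_separated _ _ removedEdgeParam_eq_zero_of_not_block
    ⟨s, rfl⟩ ⟨t, hst.2.1.symm⟩]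
  exact one_sub_spinCorr_le_of_clique_minus_edge (fun h => hst.1 (congrArg Subtype.val h))
    hcard hlam (removedEdgeParam_block hst)

end Ensemble

theorem corrDeficitBound_le_of_gap {n : ℕ} {lam : ℝ} (hl2 : 2 ≤ lam * (n + 2))
    (hgap : 2 * ((n : ℝ) + 1) < exp (lam * (n - 2) / 2)) :
    corrDeficitBound lam n ≤ 4 * ((n : ℝ) + 1) / exp (lam * (n - 2) / 2) := by
  set A := exp (lam * (n - 2) / 2)
  set E := exp (-(2 * lam * n))
  set q := exp (-(lam * n))
  have hA : 0 < A := exp_pos _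
  have hqA : q * A ≤ 1 := by
    rw [← exp_add, exp_le_one_iff]
    nlinarith
  have hpow : (1 + q) ^ n ≤ exp 1 := by
    refine one_add_pow_le_exp_one (exp_pos _).le ?_
    nlinarith [exp_pos (-(lam * n))]
  have hEAA : E * A * A ≤ exp (-2) := by
    rw [← exp_add, ← exp_add, exp_le_exp]
    nlinarith
  have hEA : E * A ≤ exp (-2) / 2 := by
    rw [le_div_iff₀ two_pos]
    nlinarith [mul_pos (exp_pos (-(2 * lam * n))) hA]
  have hexp : exp (-2) * exp 1 ≤ 1 := by
    rw [← exp_add, exp_le_one_iff]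
    norm_num
  rw [corrDeficitBound, le_div_iff₀ hA]
  calc 8 * E * (1 + q) ^ n * A = 8 * (E * A) * (1 + q) ^ n := by ring
    _ ≤ 8 * (exp (-2) / 2) * exp 1 := by gcongr
    _ ≤ 4 * ((n : ℝ) + 1) := by nlinarith [n.cast_nonneg (α := ℝ)]

theorem le_of_le_two_of_le_corrDeficitBound {d : ℕ} {lam y : ℝ} (hd : 1 ≤ d)
    (hl2 : 2 ≤ lam * ((d : ℝ) + 1)) (h2 : y ≤ 2) (hy : y ≤ corrDeficitBound lam (d - 1)) :
    y ≤ 4 * d * exp (3 * lam / 2) / exp (lam * d / 2) := by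
  obtain ⟨n, rfl⟩ := Nat.exists_eq_add_of_le' hd
  rw [Nat.add_sub_cancel] at hy
  have htarget : 4 * ((n + 1 : ℕ) : ℝ) * exp (3 * lam / 2) / exp (lam * (n + 1 : ℕ) / 2)
      = 4 * ((n : ℝ) + 1) / exp (lam * (n - 2) / 2) := by
    rw [mul_div_assoc, ← exp_sub, div_eq_mul_inv _ (exp _), ← exp_neg]
    push_cast
    ring_nf
  rw [htarget]
  by_cases hgap : 2 * ((n : ℝ) + 1) < exp (lam * (n - 2) / 2)
  · push_cast at hl2
    exact hy.trans (corrDeficitBound_le_of_gap (by linarith) hgap)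
  · rw [le_div_iff₀ (exp_pos _)]
    nlinarith [exp_pos (lam * (n - 2) / 2)]

theorem symKL_bound_deg_ensemble_general (p d : ℕ) (lam : ℝ)
    (hd : 1 ≤ d) (hlam : 0 < lam)
    (hl2 : 2 ≤ lam * ((d : ℝ) + 1))
    (s t u v : Fin p) (hstE : barAdj p d s t) (huvE : barAdj p d u v)
    (hdiff : ¬((s = u ∧ t = v) ∨ (s = v ∧ t = u)))
    (θst θuv : Fin p → Fin p → ℝ)
    (hθst : θst = fun a b =>
      if barAdj p d a b ∧ ¬((a = s ∧ b = t) ∨ (a = t ∧ b = s)) then lam else 0)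
    (hθuv : θuv = fun a b =>
      if barAdj p d a b ∧ ¬((a = u ∧ b = v) ∨ (a = v ∧ b = u)) then lam else 0) :
    symKL θst θuv ≤ 8 * lam * (d : ℝ) * Real.exp (3 * lam / 2) /
      Real.exp (lam * (d : ℝ) / 2) := by
  change θst = removedEdgeParam p d lam s t at hθst
  change θuv = removedEdgeParam p d lam u v at hθuv
  subst hθst hθuv
  set T := 4 * (d : ℝ) * exp (3 * lam / 2) / exp (lam * d / 2)
  have hdeficit : ∀ a b, barAdj p d a b → 1 - meanPar (removedEdgeParam p d lam a b) a b ≤ T :=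
    fun a b hab => le_of_le_two_of_le_corrDeficitBound hd hl2
      (by linarith [neg_one_le_meanPar (removedEdgeParam p d lam a b) a b])
      (one_sub_meanPar_removedEdgeParam_le hlam.le hab)
  have hst := hdeficit s t hstE
  have huv := hdeficit u v huvE
  have hle := meanPar_le_one (removedEdgeParam p d lam s t) u v
  have hle' := meanPar_le_one (removedEdgeParam p d lam u v) s t
  calc symKL _ _ = lam * (meanPar (removedEdgeParam p d lam s t) u v
          - meanPar (removedEdgeParam p d lam u v) u v)
        - lam * (meanPar (removedEdgeParam p d lam s t) s t
          - meanPar (removedEdgeParam p d lam u v) s t) :=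
        symKL_eq_of_sub_eq _ _ hstE.1 huvE.1 lam (removedEdgeParam_sub hstE huvE hdiff)
    _ ≤ lam * (1 - meanPar (removedEdgeParam p d lam u v) u v)
        + lam * (1 - meanPar (removedEdgeParam p d lam s t) s t) := by nlinarith
    _ ≤ lam * T + lam * T := by gcongr
    _ = _ := by ring

/-- Lemma 4 (Ensemble B for `G_{p,d}`): for the clique ensemble with one edge
removed, uniform weight `λ`, `λ(d+1) ≥ 2`, the symmetrized KL divergence between
any two distinct models is at most `8λd e^{3λ/2} / e^{λd/2}`. -/
theorem symKL_bound_deg_ensemble (p d : ℕ) (lam : ℝ)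
    (hp : 2 * (d + 1) ≤ p) (hd : 1 ≤ d) (hlam : 0 < lam)
    (hl2 : 2 ≤ lam * ((d : ℝ) + 1))
    (s t u v : Fin p) (hstE : barAdj p d s t) (huvE : barAdj p d u v)
    (hdiff : ¬((s = u ∧ t = v) ∨ (s = v ∧ t = u)))
    (θst θuv : Fin p → Fin p → ℝ)
    (hθst : θst = fun a b =>
      if barAdj p d a b ∧ ¬((a = s ∧ b = t) ∨ (a = t ∧ b = s)) then lam else 0)
    (hθuv : θuv = fun a b =>
      if barAdj p d a b ∧ ¬((a = u ∧ b = v) ∨ (a = v ∧ b = u)) then lam else 0) :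
    symKL θst θuv ≤ 8 * lam * (d : ℝ) * Real.exp (3 * lam / 2) /
      Real.exp (lam * (d : ℝ) / 2) :=
  symKL_bound_deg_ensemble_general p d lam hd hlam hl2 s t u v hstE huvE hdiff θst θuv hθst hθuv
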